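/- Let W be a finite-dimensional complex vector space, C a cubic on W and C* a cubic on W*, and define Q : V → ℂ by Q(α,r,s*,β*) = (3αβ* − (1/2)s*(r))² + (1/3)(β*·((C r r) r) + α·(s*(C* s* s*))) − (1/6)·(C r r)(C* s* s*). Then the following are equivalent: (1) Q is infinitesimally invariant under the W-action, i.e. for every t ∈ W and every w ∈ V there exist c₂, c₃, c₄ ∈ ℂ with Q(w + ε·ρ_W(t)w) = Q(w) + c₂ε² + c₃ε³ + c₄ε⁴ for all ε ∈ ℂ; (2) for all r, t ∈ W and s* ∈ W*: 2·(C r r)(C* s* (C r t)) = s*(t)·((C r r) r) + 3·s*(r)·((C r r) t). -/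
import Mathlib

noncomputable section

/-- `V = ℂ × W × W* × ℂ`. -/
abbrev VV (W : Type*) [AddCommGroup W] [Module ℂ W] :=
  ℂ × W × Module.Dual ℂ W × ℂ

/-- The action `ρ_W(t)(α,r,s*,β*) = (0, 3α·t, C r t, (1/2)·s*(t))`. -/
def rhoW {W : Type*} [AddCommGroup W] [Module ℂ W]
    (C : W →ₗ[ℂ] W →ₗ[ℂ] Module.Dual ℂ W) (t : W) (w : VV W) : VV W :=
  (0, (3 * w.1) • t, C w.2.1 t, (1 / 2) * w.2.2.1 t)

/-- The quartic
`Q(α,r,s*,β*) = (3αβ* − (1/2)s*(r))² + (1/3)(β*·C(r³) + α·C*(s*³)) − (1/6)·⟨C*(s*²),C(r²)⟩`. -/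
def Qquartic {W : Type*} [AddCommGroup W] [Module ℂ W]
    (C : W →ₗ[ℂ] W →ₗ[ℂ] Module.Dual ℂ W)
    (Cs : Module.Dual ℂ W →ₗ[ℂ] Module.Dual ℂ W →ₗ[ℂ] W) (w : VV W) : ℂ :=
  (3 * w.1 * w.2.2.2 - (1 / 2) * w.2.2.1 w.2.1) ^ 2
    + (1 / 3) * (w.2.2.2 * (C w.2.1 w.2.1) w.2.1 + w.1 * w.2.2.1 (Cs w.2.2.1 w.2.2.1))
    - (1 / 6) * (C w.2.1 w.2.1) (Cs w.2.2.1 w.2.2.1)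

/-- Explicit expansion of the quartic along the `ρ_W` flow, as a polynomial in `ε`. -/
lemma Qquartic_expand {W : Type*} [AddCommGroup W] [Module ℂ W]
    (C : W →ₗ[ℂ] W →ₗ[ℂ] Module.Dual ℂ W)
    (Cs : Module.Dual ℂ W →ₗ[ℂ] Module.Dual ℂ W →ₗ[ℂ] W)
    (t r : W) (s : Module.Dual ℂ W) (α β ε : ℂ) :
    Qquartic C Cs ((α, r, s, β) + ε • rhoW C t (α, r, s, β))
      = Qquartic C Cs (α, r, s, β)
  + ((-1/6) * (C r r) (Cs (C r t) s) + (-1/6) * (C r r) (Cs s (C r t)) + (1/6) * (C r r) r * s t + (1) * (C r r) t * α * β + (-1/6) * (C r t) (Cs s s) * α + (1/2) * (C r t) r * s r + (-2) * (C r t) r * α * β + (-1/2) * (C t r) (Cs s s) * α + (1) * (C t r) r * α * β + (1/3) * s (Cs (C r t) s) * α + (1/3) * s (Cs s (C r t)) * α) * ε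
  + ((-1/6) * (C r r) (Cs (C r t) (C r t)) + (1/2) * (C r r) t * s t * α + (-1/6) * (C r t) (Cs (C r t) s) * α + (-1/6) * (C r t) (Cs s (C r t)) * α + (1/4) * (C r t) r * (C r t) r + (1/2) * (C r t) r * s t * α + (3/2) * (C r t) t * s r * α + (-6) * (C r t) t * α * α * β + (-1/2) * (C t r) (Cs (C r t) s) * α + (-1/2) * (C t r) (Cs s (C r t)) * α + (1/2) * (C t r) r * s t * α + (3) * (C t r) t * α * α * β + (-3/2) * (C t t) (Cs s s) * α * α + (3) * (C t t) r * α * α * β + (1/3) * s (Cs (C r t) (C r t)) * α) * ε ^ 2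
  + ((-1/6) * (C r t) (Cs (C r t) (C r t)) * α + (3/2) * (C r t) r * (C r t) t * α + (3/2) * (C r t) t * s t * α * α + (-1/2) * (C t r) (Cs (C r t) (C r t)) * α + (3/2) * (C t r) t * s t * α * α + (-3/2) * (C t t) (Cs (C r t) s) * α * α + (-3/2) * (C t t) (Cs s (C r t)) * α * α + (3/2) * (C t t) r * s t * α * α + (9) * (C t t) t * α * α * α * β) * ε ^ 3
  + ((9/4) * (C r t) t * (C r t) t * α * α + (-3/2) * (C t t) (Cs (C r t) (C r t)) * α * α + (9/2) * (C t t) t * s t * α * α * α) * ε ^ 4 := by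
  simp only [Qquartic, rhoW, Prod.mk_add_mk, Prod.smul_mk, smul_eq_mul, map_add, map_smul,
    LinearMap.add_apply, LinearMap.smul_apply, smul_smul]
  ring

/-- The quartic `Q` is infinitesimally invariant under the `W`-action `ρ_W` if and only if the
identity `2·(C r r)(C* s* (C r t)) = s*(t)·((C r r) r) + 3·s*(r)·((C r r) t)` holds. -/
theorem stmt2 {W : Type*} [AddCommGroup W] [Module ℂ W] [FiniteDimensional ℂ W]
    (C : W →ₗ[ℂ] W →ₗ[ℂ] Module.Dual ℂ W)
    (Cs : Module.Dual ℂ W →ₗ[ℂ] Module.Dual ℂ W →ₗ[ℂ] W)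
    (hC : ∀ r s t : W, C r s t = C s r t ∧ C r s t = C r t s)
    (hCs : ∀ a b c : Module.Dual ℂ W, c (Cs a b) = c (Cs b a) ∧ c (Cs a b) = b (Cs a c)) :
    (∀ (t : W) (w : VV W), ∃ c₂ c₃ c₄ : ℂ, ∀ ε : ℂ,
      Qquartic C Cs (w + ε • rhoW C t w)
        = Qquartic C Cs w + c₂ * ε ^ 2 + c₃ * ε ^ 3 + c₄ * ε ^ 4) ↔
    (∀ (r t : W) (s : Module.Dual ℂ W),
      2 * (C r r) (Cs s (C r t)) = s t * (C r r) r + 3 * s r * (C r r) t) := by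
  constructor
  · intro h r t s
    obtain ⟨c₂, c₃, c₄, hc⟩ := h t (0, r, s, 0)
    have key : ∀ ε : ℂ,
        ((-1/6) * (C r r) (Cs (C r t) s) + (-1/6) * (C r r) (Cs s (C r t))
          + (1/6) * (C r r) r * s t + (1/2) * (C r t) r * s r) * ε
        + ((-1/6) * (C r r) (Cs (C r t) (C r t)) + (1/4) * (C r t) r * (C r t) r - c₂) * ε ^ 2
        - c₃ * ε ^ 3 - c₄ * ε ^ 4 = 0 := by
      intro ε
      have h1 := hc ε
      have h2 := Qquartic_expand C Cs t r s 0 0 ε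
      linear_combination h1 - h2
    have hE1 : (-1/6 : ℂ) * (C r r) (Cs (C r t) s) + (-1/6) * (C r r) (Cs s (C r t))
        + (1/6) * (C r r) r * s t + (1/2) * (C r t) r * s r = 0 := by
      linear_combination (2/3 : ℂ) * key 1 - (2/3 : ℂ) * key (-1)
        - (1/12 : ℂ) * key 2 + (1/12 : ℂ) * key (-2)
    linear_combination (-6 : ℂ) * hE1 - (hCs (C r t) s (C r r)).1 + 3 * s r * (hC r t r).2
  · intro h t w
    obtain ⟨α, r, s, β⟩ := w
    refine ⟨((-1/6) * (C r r) (Cs (C r t) (C r t)) + (1/2) * (C r r) t * s t * α + (-1/6) * (C r t) (Cs (C r t) s) * α + (-1/6) * (C r t) (Cs s (C r t)) * α + (1/4) * (C r t) r * (C r t) r + (1/2) * (C r t) r * s t * α + (3/2) * (C r t) t * s r * α + (-6) * (C r t) t * α * α * β + (-1/2) * (C t r) (Cs (C r t) s) * α + (-1/2) * (C t r) (Cs s (C r t)) * α + (1/2) * (C t r) r * s t * α + (3) * (C t r) t * α * α * β + (-3/2) * (C t t) (Cs s s) * α * α + (3) * (C t t) r * α * α * β + (1/3) * s (Cs (C r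 t) (C r t)) * α),
      ((-1/6) * (C r t) (Cs (C r t) (C r t)) * α + (3/2) * (C r t) r * (C r t) t * α + (3/2) * (C r t) t * s t * α * α + (-1/2) * (C t r) (Cs (C r t) (C r t)) * α + (3/2) * (C t r) t * s t * α * α + (-3/2) * (C t t) (Cs (C r t) s) * α * α + (-3/2) * (C t t) (Cs s (C r t)) * α * α + (3/2) * (C t t) r * s t * α * α + (9) * (C t t) t * α * α * α * β),
      ((9/4) * (C r t) t * (C r t) t * α * α + (-3/2) * (C t t) (Cs (C r t) (C r t)) * α * α + (9/2) * (C t t) t * s t * α * α * α), fun ε => ?_⟩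
    rw [Qquartic_expand C Cs t r s α β ε]
    linear_combination (ε * (-(1/6) : ℂ)) * h r t s
      + (ε * (-(1/6) : ℂ)) * (hCs (C r t) s (C r r)).1
      + (ε * ((1/2) * s r - α * β)) * (hC r t r).2
      + (ε * (α * β)) * (hC t r r).1
      + (ε * (2 * α / 3)) * (hCs s (C r t) s).2
      + (ε * (α / 3)) * (hCs (C r t) s s).1
      + (ε * (-α / 2)) * (hC t r (Cs s s)).1
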